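/- Variable lookup is correct: if the closure n[e] is closed (the de Bruijn index n is bound by the value environment e), then ⌊n[e]⌋ reduces in zero or more CAU⁻σ steps to e(n), the n-th closure stored in e. -/

import Mathlib

namespace CAU

/-! ## CAU⁻ syntax (de Bruijn, pure: no explicit operators) -/

/-- Trails of CAU⁻. -/
inductive NTr : Type
  | r : NTr
  | t : NTr → NTr → NTr
  | pb : NTr                      -- β
  | pbb : NTr                     -- β!
  | ti : NTr
  | lam : NTr → NTr
  | ap : NTr → NTr → NTr
  | lets : NTr → NTr → NTr
  | tb : (Fin 9 → NTr) → NTr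
  deriving Inhabited

/-- Terms of CAU⁻ (de Bruijn indices). -/
inductive NTm : Type
  | var : ℕ → NTm
  | lam : NTm → NTm
  | ap : NTm → NTm → NTm
  | lets : NTm → NTm → NTm
  | bang : NTr → NTm → NTm
  | ann : NTr → NTm → NTm         -- q ▷ M
  | insp : (Fin 9 → NTm) → NTm    -- ι(ϑ)
  deriving Inhabited

/-- Permutation (τ) reduction on CAU⁻ trails, closed under arbitrary contexts. -/
inductive TStepQ : NTr → NTr → Prop
  | tReflR (q) : TStepQ (.t q .r) q
  | tReflL (q) : TStepQ (.t .r q) q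
  | tbRefl : TStepQ (.tb fun _ => .r) .r
  | apRefl : TStepQ (.ap .r .r) .r
  | lamRefl : TStepQ (.lam .r) .r
  | letsRefl : TStepQ (.lets .r .r) .r
  | tAssoc (q₁ q₂ q₃) : TStepQ (.t (.t q₁ q₂) q₃) (.t q₁ (.t q₂ q₃))
  | tLam (q q') : TStepQ (.t (.lam q) (.lam q')) (.lam (.t q q'))
  | tLamT (q₁ q₁' q) :
      TStepQ (.t (.lam q₁) (.t (.lam q₁') q)) (.t (.lam (.t q₁ q₁')) q)
  | tAp (q₁ q₂ q₁' q₂') :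
      TStepQ (.t (.ap q₁ q₂) (.ap q₁' q₂')) (.ap (.t q₁ q₁') (.t q₂ q₂'))
  | tApT (q₁ q₂ q₁' q₂' q) :
      TStepQ (.t (.ap q₁ q₂) (.t (.ap q₁' q₂') q)) (.t (.ap (.t q₁ q₁') (.t q₂ q₂')) q)
  | tLets (q₁ q₂ q₁' q₂') :
      TStepQ (.t (.lets q₁ q₂) (.lets q₁' q₂')) (.lets (.t q₁ q₁') (.t q₂ q₂'))
  | tLetsT (q₁ q₂ q₁' q₂' q) :
      TStepQ (.t (.lets q₁ q₂) (.t (.lets q₁' q₂') q)) (.t (.lets (.t q₁ q₁') (.t q₂ q₂')) q)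
  | tTb (ζ₁ ζ₂) : TStepQ (.t (.tb ζ₁) (.tb ζ₂)) (.tb fun i => .t (ζ₁ i) (ζ₂ i))
  | tTbT (ζ₁ ζ₂ q) :
      TStepQ (.t (.tb ζ₁) (.t (.tb ζ₂) q)) (.t (.tb fun i => .t (ζ₁ i) (ζ₂ i)) q)
  | tL {q q''} (q') : TStepQ q q'' → TStepQ (.t q q') (.t q'' q')
  | tR {q' q''} (q) : TStepQ q' q'' → TStepQ (.t q q') (.t q q'')
  | lamC {q q'} : TStepQ q q' → TStepQ (.lam q) (.lam q')
  | apL {q q''} (q') : TStepQ q q'' → TStepQ (.ap q q') (.ap q'' q')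
  | apR {q' q''} (q) : TStepQ q' q'' → TStepQ (.ap q q') (.ap q q'')
  | letsL {q q''} (q') : TStepQ q q'' → TStepQ (.lets q q') (.lets q'' q')
  | letsR {q' q''} (q) : TStepQ q' q'' → TStepQ (.lets q q') (.lets q q'')
  | tbC {ζ} (i : Fin 9) {q'} : TStepQ (ζ i) q' →
      TStepQ (.tb ζ) (.tb (Function.update ζ i q'))

/-- Permutation (τ) reduction on CAU⁻ terms, closed under arbitrary contexts. -/
inductive TStepN : NTm → NTm → Prop
  | annRefl (M) : TStepN (.ann .r M) M
  | annAnn (q q' M) : TStepN (.ann q (.ann q' M)) (.ann (.t q q') M)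
  | bangAnn (q q' M) : TStepN (.bang q (.ann q' M)) (.bang (.t q q') M)
  | lamAnn (q M) : TStepN (.lam (.ann q M)) (.ann (.lam q) (.lam M))
  | apAnnL (q M N) : TStepN (.ap (.ann q M) N) (.ann (.ap q .r) (.ap M N))
  | apAnnR (q M N) : TStepN (.ap M (.ann q N)) (.ann (.ap .r q) (.ap M N))
  | letsAnnL (q M N) : TStepN (.lets (.ann q M) N) (.ann (.lets q .r) (.lets M N))
  | letsAnnR (q M N) : TStepN (.lets M (.ann q N)) (.ann (.lets .r q) (.lets M N))
  | inspAnn (ϑ : Fin 9 → NTm) (i : Fin 9) (q M) : ϑ i = .ann q M →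
      TStepN (.insp ϑ)
        (.ann (.tb (Function.update (fun _ => NTr.r) i q)) (.insp (Function.update ϑ i M)))
  | lamC {M M'} : TStepN M M' → TStepN (.lam M) (.lam M')
  | apL {M M'} (N) : TStepN M M' → TStepN (.ap M N) (.ap M' N)
  | apR {N N'} (M) : TStepN N N' → TStepN (.ap M N) (.ap M N')
  | letsL {M M'} (N) : TStepN M M' → TStepN (.lets M N) (.lets M' N)
  | letsR {N N'} (M) : TStepN N N' → TStepN (.lets M N) (.lets M N')
  | bangQ {q q'} (M) : TStepQ q q' → TStepN (.bang q M) (.bang q' M)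
  | bangM {M M'} (q) : TStepN M M' → TStepN (.bang q M) (.bang q M')
  | annQ {q q'} (M) : TStepQ q q' → TStepN (.ann q M) (.ann q' M)
  | annM {M M'} (q) : TStepN M M' → TStepN (.ann q M) (.ann q M')
  | inspC {ϑ} (i : Fin 9) {M'} : TStepN (ϑ i) M' →
      TStepN (.insp ϑ) (.insp (Function.update ϑ i M'))

end CAU

/-! ## CAU⁻σ syntax: explicit substitutions and explicit trail projections -/

namespace CAU

mutual
  /-- Terms of CAU⁻σ. -/
  inductive Tm : Type
    | one : Tm                               -- de Bruijn index 1
    | lam : Tm → Tm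
    | ap : Tm → Tm → Tm
    | lets : Tm → Tm → Tm
    | bang : Tr → Tm → Tm
    | ann : Tr → Tm → Tm                     -- q ▷ M
    | insp : (Fin 9 → Tm) → Tm               -- ι(ϑ)
    | sub : Tm → Sb → Tm                     -- closure M[s]
    | er : Tm → Tm                           -- explicit trail erasure ⌊M⌋
  /-- Trails of CAU⁻σ. -/
  inductive Tr : Type
    | r : Tr
    | t : Tr → Tr → Tr
    | pb : Tr                                -- β
    | pbb : Tr                               -- β!
    | ti : Tr
    | lam : Tr → Tr
    | ap : Tr → Tr → Tr
    | lets : Tr → Tr → Tr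
    | tb : (Fin 9 → Tr) → Tr
    | ext : Tm → Tr                          -- explicit trail extraction ⌈M⌉
  /-- Explicit substitutions of CAU⁻σ. -/
  inductive Sb : Type
    | id : Sb                                -- ⟨⟩
    | sh : Sb                                -- ↑
    | cons : Tm → Sb → Sb                    -- M · s
    | comp : Sb → Sb → Sb                    -- s ∘ t
end

instance : Inhabited Tm := ⟨Tm.one⟩
instance : Inhabited Tr := ⟨Tr.r⟩
instance : Inhabited Sb := ⟨Sb.id⟩

/-- `pow n` is the iterated lift `↑^(n+1)`. -/
def pow : ℕ → Sb
  | 0 => .sh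
  | n + 1 => .comp .sh (pow n)

mutual
  /-- σ∪τ one-step reduction on CAU⁻σ terms (closed under arbitrary contexts). -/
  inductive StepT : Tm → Tm → Prop
    -- σ-rules for explicit substitutions
    | subOneId : StepT (.sub .one .id) .one
    | subOneCons (M s) : StepT (.sub .one (.cons M s)) M
    | subLam (M s) : StepT (.sub (.lam M) s) (.lam (.sub M (.cons .one (.comp s .sh))))
    | subAp (M N s) : StepT (.sub (.ap M N) s) (.ap (.sub M s) (.sub N s))
    | subBang (q M s) : StepT (.sub (.bang q M) s) (.bang q (.sub M s))
    | subLets (M N s) :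
        StepT (.sub (.lets M N) s) (.lets (.sub M s) (.sub N (.cons .one (.comp s .sh))))
    | subAnn (q M s) : StepT (.sub (.ann q M) s) (.ann q (.sub M s))
    | subInsp (ϑ s) : StepT (.sub (.insp ϑ) s) (.insp fun i => .sub (ϑ i) s)
    | subSub (M s t) : StepT (.sub (.sub M s) t) (.sub M (.comp s t))
    -- σ-rules for explicit trail erasure
    | erOne : StepT (.er .one) .one
    | erOneSh (n) : StepT (.er (.sub .one (pow n))) (.sub .one (pow n))
    | erLam (M) : StepT (.er (.lam M)) (.lam (.er M))
    | erAp (M N) : StepT (.er (.ap M N)) (.ap (.er M) (.er N))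
    | erBang (q M) : StepT (.er (.bang q M)) (.bang q M)
    | erLets (M N) : StepT (.er (.lets M N)) (.lets (.er M) (.er N))
    | erAnn (q M) : StepT (.er (.ann q M)) (.er M)
    | erInsp (ϑ) : StepT (.er (.insp ϑ)) (.insp fun i => .er (ϑ i))
    -- τ-rules on terms
    | annRefl (M) : StepT (.ann .r M) M
    | annAnn (q q' M) : StepT (.ann q (.ann q' M)) (.ann (.t q q') M)
    | bangAnn (q q' M) : StepT (.bang q (.ann q' M)) (.bang (.t q q') M)
    | lamAnn (q M) : StepT (.lam (.ann q M)) (.ann (.lam q) (.lam M))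
    | apAnnL (q M N) : StepT (.ap (.ann q M) N) (.ann (.ap q .r) (.ap M N))
    | apAnnR (q M N) : StepT (.ap M (.ann q N)) (.ann (.ap .r q) (.ap M N))
    | letsAnnL (q M N) : StepT (.lets (.ann q M) N) (.ann (.lets q .r) (.lets M N))
    | letsAnnR (q M N) : StepT (.lets M (.ann q N)) (.ann (.lets .r q) (.lets M N))
    | inspAnn (ϑ : Fin 9 → Tm) (i : Fin 9) (q M) : ϑ i = .ann q M →
        StepT (.insp ϑ)
          (.ann (.tb (Function.update (fun _ => Tr.r) i q)) (.insp (Function.update ϑ i M)))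
    -- congruence closure
    | lamC {M M'} : StepT M M' → StepT (.lam M) (.lam M')
    | apL {M M'} (N) : StepT M M' → StepT (.ap M N) (.ap M' N)
    | apR {N N'} (M) : StepT N N' → StepT (.ap M N) (.ap M N')
    | letsL {M M'} (N) : StepT M M' → StepT (.lets M N) (.lets M' N)
    | letsR {N N'} (M) : StepT N N' → StepT (.lets M N) (.lets M N')
    | bangQ {q q'} (M) : StepQ q q' → StepT (.bang q M) (.bang q' M)
    | bangM {M M'} (q) : StepT M M' → StepT (.bang q M) (.bang q M')
    | annQ {q q'} (M) : StepQ q q' → StepT (.ann q M) (.ann q' M)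
    | annM {M M'} (q) : StepT M M' → StepT (.ann q M) (.ann q M')
    | inspC {ϑ} (i : Fin 9) {M'} : StepT (ϑ i) M' →
        StepT (.insp ϑ) (.insp (Function.update ϑ i M'))
    | subM {M M'} (s) : StepT M M' → StepT (.sub M s) (.sub M' s)
    | subS {s s'} (M) : StepS s s' → StepT (.sub M s) (.sub M s')
    | erC {M M'} : StepT M M' → StepT (.er M) (.er M')
  /-- σ∪τ one-step reduction on CAU⁻σ trails. -/
  inductive StepQ : Tr → Tr → Prop
    -- σ-rules for explicit trail extraction
    | extOne : StepQ (.ext .one) .r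
    | extOneSh (n) : StepQ (.ext (.sub .one (pow n))) .r
    | extLam (M) : StepQ (.ext (.lam M)) (.lam (.ext M))
    | extAp (M N) : StepQ (.ext (.ap M N)) (.ap (.ext M) (.ext N))
    | extBang (q M) : StepQ (.ext (.bang q M)) .r
    | extLets (M N) : StepQ (.ext (.lets M N)) (.lets (.ext M) (.ext N))
    | extAnn (q M) : StepQ (.ext (.ann q M)) (.t q (.ext M))
    | extInsp (ϑ) : StepQ (.ext (.insp ϑ)) (.tb fun i => .ext (ϑ i))
    -- τ-rules on trails
    | tReflR (q) : StepQ (.t q .r) q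
    | tReflL (q) : StepQ (.t .r q) q
    | tbRefl : StepQ (.tb fun _ => .r) .r
    | apRefl : StepQ (.ap .r .r) .r
    | lamRefl : StepQ (.lam .r) .r
    | letsRefl : StepQ (.lets .r .r) .r
    | tAssoc (q₁ q₂ q₃) : StepQ (.t (.t q₁ q₂) q₃) (.t q₁ (.t q₂ q₃))
    | tLam (q q') : StepQ (.t (.lam q) (.lam q')) (.lam (.t q q'))
    | tLamT (q₁ q₁' q) :
        StepQ (.t (.lam q₁) (.t (.lam q₁') q)) (.t (.lam (.t q₁ q₁')) q)
    | tAp (q₁ q₂ q₁' q₂') :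
        StepQ (.t (.ap q₁ q₂) (.ap q₁' q₂')) (.ap (.t q₁ q₁') (.t q₂ q₂'))
    | tApT (q₁ q₂ q₁' q₂' q) :
        StepQ (.t (.ap q₁ q₂) (.t (.ap q₁' q₂') q)) (.t (.ap (.t q₁ q₁') (.t q₂ q₂')) q)
    | tLets (q₁ q₂ q₁' q₂') :
        StepQ (.t (.lets q₁ q₂) (.lets q₁' q₂')) (.lets (.t q₁ q₁') (.t q₂ q₂'))
    | tLetsT (q₁ q₂ q₁' q₂' q) :
        StepQ (.t (.lets q₁ q₂) (.t (.lets q₁' q₂') q)) (.t (.lets (.t q₁ q₁') (.t q₂ q₂')) q)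
    | tTb (ζ₁ ζ₂) : StepQ (.t (.tb ζ₁) (.tb ζ₂)) (.tb fun i => .t (ζ₁ i) (ζ₂ i))
    | tTbT (ζ₁ ζ₂ q) :
        StepQ (.t (.tb ζ₁) (.t (.tb ζ₂) q)) (.t (.tb fun i => .t (ζ₁ i) (ζ₂ i)) q)
    -- congruence closure
    | tL {q q''} (q') : StepQ q q'' → StepQ (.t q q') (.t q'' q')
    | tR {q' q''} (q) : StepQ q' q'' → StepQ (.t q q') (.t q q'')
    | lamC {q q'} : StepQ q q' → StepQ (.lam q) (.lam q')
    | apL {q q''} (q') : StepQ q q'' → StepQ (.ap q q') (.ap q'' q')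
    | apR {q' q''} (q) : StepQ q' q'' → StepQ (.ap q q') (.ap q q'')
    | letsL {q q''} (q') : StepQ q q'' → StepQ (.lets q q') (.lets q'' q')
    | letsR {q' q''} (q) : StepQ q' q'' → StepQ (.lets q q') (.lets q q'')
    | tbC {ζ} (i : Fin 9) {q'} : StepQ (ζ i) q' → StepQ (.tb ζ) (.tb (Function.update ζ i q'))
    | extC {M M'} : StepT M M' → StepQ (.ext M) (.ext M')
  /-- σ one-step reduction on CAU⁻σ substitutions. -/
  inductive StepS : Sb → Sb → Prop
    | idComp (s) : StepS (.comp .id s) s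
    | shId : StepS (.comp .sh .id) .sh
    | shCons (M s) : StepS (.comp .sh (.cons M s)) s
    | consComp (M s t) : StepS (.comp (.cons M s) t) (.cons (.sub M t) (.comp s t))
    | compAssoc (s₁ s₂ s₃) : StepS (.comp (.comp s₁ s₂) s₃) (.comp s₁ (.comp s₂ s₃))
    | consM {M M'} (s) : StepT M M' → StepS (.cons M s) (.cons M' s)
    | consS {s s'} (M) : StepS s s' → StepS (.cons M s) (.cons M s')
    | compL {s s''} (t) : StepS s s'' → StepS (.comp s t) (.comp s'' t)
    | compR {t t'} (s) : StepS t t' → StepS (.comp s t) (.comp s t')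
end

/-- στ-normal terms. -/
def NormalT (M : Tm) : Prop := ∀ N, ¬ StepT M N
/-- στ-normal trails. -/
def NormalQ (q : Tr) : Prop := ∀ q', ¬ StepQ q q'
/-- σ-normal substitutions. -/
def NormalS (s : Sb) : Prop := ∀ t, ¬ StepS s t

/-- `nf` is a στ-normal-form function for terms. -/
def IsNFT (nf : Tm → Tm) : Prop :=
  ∀ M, Relation.ReflTransGen StepT M (nf M) ∧ NormalT (nf M)
/-- `nfq` is a στ-normal-form function for trails. -/
def IsNFQ (nfq : Tr → Tr) : Prop :=
  ∀ q, Relation.ReflTransGen StepQ q (nfq q) ∧ NormalQ (nfq q)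
/-- `nfs` is a σ-normal-form function for substitutions. -/
def IsNFS (nfs : Sb → Sb) : Prop :=
  ∀ s, Relation.ReflTransGen StepS s (nfs s) ∧ NormalS (nfs s)

end CAU
namespace CAU

/-! ## Grammar of στ-normal forms -/

mutual
  /-- Grammar of στ-normal CAU⁻σ terms. -/
  inductive GTm : Tm → Prop
    | one : GTm .one
    | oneSh (n) : GTm (.sub .one (pow n))
    | lam {M} : GTm M → GTm (.lam M)
    | ap {M N} : GTm M → GTm N → GTm (.ap M N)
    | lets {M N} : GTm M → GTm N → GTm (.lets M N)
    | bang {q M} : GTr q → GTm M → GTm (.bang q M)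
    | ann {q M} : GTr q → GTm M → GTm (.ann q M)
    | insp {ϑ} : (∀ i, GTm (ϑ i)) → GTm (.insp ϑ)
  /-- Grammar of στ-normal CAU⁻σ trails. -/
  inductive GTr : Tr → Prop
    | r : GTr .r
    | t {q q'} : GTr q → GTr q' → GTr (.t q q')
    | pb : GTr .pb
    | pbb : GTr .pbb
    | ti : GTr .ti
    | lam {q} : GTr q → GTr (.lam q)
    | ap {q q'} : GTr q → GTr q' → GTr (.ap q q')
    | lets {q q'} : GTr q → GTr q' → GTr (.lets q q')
    | tb {ζ} : (∀ i, GTr (ζ i)) → GTr (.tb ζ)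
end

/-- Grammar of σ-normal CAU⁻σ substitutions. -/
inductive GSb : Sb → Prop
  | id : GSb .id
  | shn (n) : GSb (pow n)
  | cons {M s} : GTm M → GSb s → GSb (.cons M s)

/-! ## Focused forms and meta-level projections -/

/-- Meta-level trail erasure ⌊M⌋*, relative to a normal form function. -/
def metaErase (nf : Tm → Tm) (M : Tm) : Tm :=
  match nf M with
  | .ann _ M' => M'
  | N => N

/-- Meta-level trail extraction ⌈M⌉*, relative to a normal form function. -/
def metaExt (nf : Tm → Tm) (M : Tm) : Tr :=
  match nf M with
  | .ann q _ => q
  | _ => .r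

/-- The focused form ⟨M⟩ = ⌈M⌉* ▷ ⌊M⌋*. -/
def focusT (nf : Tm → Tm) (M : Tm) : Tm := .ann (metaExt nf M) (metaErase nf M)

/-- Focusing a σ-normal substitution pointwise. -/
def focusSb (nf : Tm → Tm) : Sb → Sb
  | .cons M s => .cons (focusT nf M) (focusSb nf s)
  | s => s

end CAU
namespace CAU

/-! ## Embedding pure (σ-normal) terms into CAU⁻σ -/

/-- Embedding of pure trails. -/
def toTr : NTr → Tr
  | .r => .r
  | .t q q' => .t (toTr q) (toTr q')
  | .pb => .pb
  | .pbb => .pbb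
  | .ti => .ti
  | .lam q => .lam (toTr q)
  | .ap q q' => .ap (toTr q) (toTr q')
  | .lets q q' => .lets (toTr q) (toTr q')
  | .tb ζ => .tb fun i => toTr (ζ i)

/-- Embedding of pure terms: de Bruijn index `var n` (0-based) becomes `1[↑ⁿ]`. -/
def toTm : NTm → Tm
  | .var 0 => .one
  | .var (n+1) => .sub .one (pow n)
  | .lam M => .lam (toTm M)
  | .ap M N => .ap (toTm M) (toTm N)
  | .lets M N => .lets (toTm M) (toTm N)
  | .bang q M => .bang (toTr q) (toTm M)
  | .ann q M => .ann (toTr q) (toTm M)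
  | .insp ϑ => .insp fun i => toTm (ϑ i)

/-- `shiftP p` is the substitution `↑ᵖ` (with `↑⁰ = ⟨⟩`). -/
def shiftP : ℕ → Sb
  | 0 => .id
  | n + 1 => pow n

/-- The substitution `N₁ · … · N_k · ↑ᵖ`. -/
def mkSub : List Tm → ℕ → Sb
  | [], p => shiftP p
  | M :: l, p => .cons M (mkSub l p)

/-! ## Meta-level substitution on pure terms -/

/-- Lift by one all free indices ≥ d. -/
def liftN (d : ℕ) : NTm → NTm
  | .var n => if n < d then .var n else .var (n + 1)
  | .lam M => .lam (liftN (d+1) M)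
  | .ap M N => .ap (liftN d M) (liftN d N)
  | .lets M N => .lets (liftN d M) (liftN d (N))
  | .bang q M => .bang q (liftN d M)
  | .ann q M => .ann q (liftN d M)
  | .insp ϑ => .insp fun i => liftN d (ϑ i)

/-- Meta-level simultaneous substitution `M{N⃗}ₚ` on pure terms. -/
def msubst : NTm → ℕ → List NTm → NTm
  | .var n, p, l => if h : n < l.length then l.get ⟨n, h⟩ else .var (n - l.length + p)
  | .lam M, p, l => .lam (msubst M (p+1) (.var 0 :: l.map (liftN 0)))
  | .ap M N, p, l => .ap (msubst M p l) (msubst N p l)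
  | .lets M N, p, l => .lets (msubst M p l) (msubst N (p+1) (.var 0 :: l.map (liftN 0)))
  | .bang q M, p, l => .bang q (msubst M p l)
  | .ann q M, p, l => .ann q (msubst M p l)
  | .insp ϑ, p, l => .insp fun i => msubst (ϑ i) p l

/-! ## Trail inspection: structural recursion qϑ over trails -/

/-- Structural recursion `qϑ` over a pure trail, applying the nine inspection branches. -/
def recTrailN : NTr → (Fin 9 → NTm) → NTm
  | .r, ϑ => ϑ 0
  | .t q q', ϑ => .ap (.ap (ϑ 1) (recTrailN q ϑ)) (recTrailN q' ϑ)
  | .pb, ϑ => ϑ 2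
  | .pbb, ϑ => ϑ 3
  | .ti, ϑ => ϑ 4
  | .lam q, ϑ => .ap (ϑ 5) (recTrailN q ϑ)
  | .ap q q', ϑ => .ap (.ap (ϑ 6) (recTrailN q ϑ)) (recTrailN q' ϑ)
  | .lets q q', ϑ => .ap (.ap (ϑ 7) (recTrailN q ϑ)) (recTrailN q' ϑ)
  | .tb ζ, ϑ => (List.ofFn fun i => recTrailN (ζ i) ϑ).foldl .ap (ϑ 8)

/-- Structural recursion `qϑ` over a CAU⁻σ trail (junk value on explicit extractions,
which cannot occur in the στ-normal trails it is applied to). -/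
def recTrailT : Tr → (Fin 9 → Tm) → Tm
  | .r, ϑ => ϑ 0
  | .t q q', ϑ => .ap (.ap (ϑ 1) (recTrailT q ϑ)) (recTrailT q' ϑ)
  | .pb, ϑ => ϑ 2
  | .pbb, ϑ => ϑ 3
  | .ti, ϑ => ϑ 4
  | .lam q, ϑ => .ap (ϑ 5) (recTrailT q ϑ)
  | .ap q q', ϑ => .ap (.ap (ϑ 6) (recTrailT q ϑ)) (recTrailT q' ϑ)
  | .lets q q', ϑ => .ap (.ap (ϑ 7) (recTrailT q ϑ)) (recTrailT q' ϑ)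
  | .tb ζ, ϑ => (List.ofFn fun i => recTrailT (ζ i) ϑ).foldl .ap (ϑ 8)
  | .ext _, ϑ => ϑ 0

/-! ## Meta-level β-reduction on pure (σ-normal) terms -/

/-- One inspection step in a bang-free context of a pure term:
some `ι(ϑ)` not guarded by a bang is replaced by `ti ▷ qϑ`. -/
inductive FInspN (q : NTr) : NTm → NTm → Prop
  | insp (ϑ) : FInspN q (.insp ϑ) (.ann .ti (recTrailN q ϑ))
  | lam {M M'} : FInspN q M M' → FInspN q (.lam M) (.lam M')
  | apL {M M'} (N) : FInspN q M M' → FInspN q (.ap M N) (.ap M' N)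
  | apR {N N'} (M) : FInspN q N N' → FInspN q (.ap M N) (.ap M N')
  | letsL {M M'} (N) : FInspN q M M' → FInspN q (.lets M N) (.lets M' N)
  | letsR {N N'} (M) : FInspN q N N' → FInspN q (.lets M N) (.lets M N')
  | ann {M M'} (q') : FInspN q M M' → FInspN q (.ann q' M) (.ann q' M')
  | inspC {ϑ} (i : Fin 9) {M'} : FInspN q (ϑ i) M' →
      FInspN q (.insp ϑ) (.insp (Function.update ϑ i M'))

/-- Meta-level β-reduction on pure (σ-normal) terms, closed under σ-normal contexts. -/
inductive BetaN : NTm → NTm → Prop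
  | beta (M N) : BetaN (.ap (.lam M) N) (.ann .pb (msubst M 0 [N]))
  | betaBang (q M N) : BetaN (.lets (.bang q M) N) (.ann .pbb (msubst N 0 [.ann q M]))
  | insp {q M M'} : FInspN q M M' → BetaN (.bang q M) (.bang q M')
  | lam {M M'} : BetaN M M' → BetaN (.lam M) (.lam M')
  | apL {M M'} (N) : BetaN M M' → BetaN (.ap M N) (.ap M' N)
  | apR {N N'} (M) : BetaN N N' → BetaN (.ap M N) (.ap M N')
  | letsL {M M'} (N) : BetaN M M' → BetaN (.lets M N) (.lets M' N)
  | letsR {N N'} (M) : BetaN N N' → BetaN (.lets M N) (.lets M N')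
  | bang {M M'} (q) : BetaN M M' → BetaN (.bang q M) (.bang q M')
  | ann {M M'} (q) : BetaN M M' → BetaN (.ann q M) (.ann q M')
  | inspC {ϑ} (i : Fin 9) {M'} : BetaN (ϑ i) M' →
      BetaN (.insp ϑ) (.insp (Function.update ϑ i M'))

/-! ## Lazy Beta-reduction of CAU⁻σ -/

/-- One inspection step in a context whose hole is not inside a bang, a substitution,
or an erasure: some `ι(ϑ)` is replaced by `ti ▷ qϑ`. -/
inductive FInspT (q : Tr) : Tm → Tm → Prop
  | insp (ϑ) : FInspT q (.insp ϑ) (.ann .ti (recTrailT q ϑ))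
  | lam {M M'} : FInspT q M M' → FInspT q (.lam M) (.lam M')
  | apL {M M'} (N) : FInspT q M M' → FInspT q (.ap M N) (.ap M' N)
  | apR {N N'} (M) : FInspT q N N' → FInspT q (.ap M N) (.ap M N')
  | letsL {M M'} (N) : FInspT q M M' → FInspT q (.lets M N) (.lets M' N)
  | letsR {N N'} (M) : FInspT q N N' → FInspT q (.lets M N) (.lets M N')
  | ann {M M'} (q') : FInspT q M M' → FInspT q (.ann q' M) (.ann q' M')
  | inspC {ϑ} (i : Fin 9) {M'} : FInspT q (ϑ i) M' →
      FInspT q (.insp ϑ) (.insp (Function.update ϑ i M'))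

mutual
  /-- The lazy Beta-relation of CAU⁻σ (relative to a normal form function `nfq`
  for trails, used in the trail inspection rule), closed under evaluation contexts
  `E_σ` whose hole does not occur inside an erasure. -/
  inductive LBeta (nfq : Tr → Tr) : Tm → Tm → Prop
    | beta (M N) :
        LBeta nfq (.ap (.lam M) N)
          (.ann (.t (.ap (.lam (.ext M)) (.ext N)) .pb) (.sub (.er M) (.cons (.er N) .id)))
    | betaBang (q M N) :
        LBeta nfq (.lets (.bang q M) N)
          (.ann (.t (.lets .r (.ext N)) .pbb) (.sub (.er N) (.cons (.ann q M) .id)))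
    | insp {q M M'} : FInspT (nfq (.t q (.ext M))) M M' →
        LBeta nfq (.bang q M) (.bang q M')
    | lam {M M'} : LBeta nfq M M' → LBeta nfq (.lam M) (.lam M')
    | apL {M M'} (N) : LBeta nfq M M' → LBeta nfq (.ap M N) (.ap M' N)
    | apR {N N'} (M) : LBeta nfq N N' → LBeta nfq (.ap M N) (.ap M N')
    | letsL {M M'} (N) : LBeta nfq M M' → LBeta nfq (.lets M N) (.lets M' N)
    | letsR {N N'} (M) : LBeta nfq N N' → LBeta nfq (.lets M N) (.lets M N')
    | bang {M M'} (q) : LBeta nfq M M' → LBeta nfq (.bang q M) (.bang q M')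
    | ann {M M'} (q) : LBeta nfq M M' → LBeta nfq (.ann q M) (.ann q M')
    | inspC {ϑ} (i : Fin 9) {M'} : LBeta nfq (ϑ i) M' →
        LBeta nfq (.insp ϑ) (.insp (Function.update ϑ i M'))
    | subM {M M'} (s) : LBeta nfq M M' → LBeta nfq (.sub M s) (.sub M' s)
    | subS {s s'} (M) : LBetaSub nfq s s' → LBeta nfq (.sub M s) (.sub M s')
  /-- Lazy Beta-reduction inside substitutions. -/
  inductive LBetaSub (nfq : Tr → Tr) : Sb → Sb → Prop
    | consM {M M'} (s) : LBeta nfq M M' → LBetaSub nfq (.cons M s) (.cons M' s)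
    | consS {s s'} (M) : LBetaSub nfq s s' → LBetaSub nfq (.cons M s) (.cons M s')
    | compL {s s''} (t) : LBetaSub nfq s s'' → LBetaSub nfq (.comp s t) (.comp s'' t)
    | compR {t t'} (s) : LBetaSub nfq t t' → LBetaSub nfq (.comp s t) (.comp s t')
end

/-- CAU⁻σ reduction: the union of Beta-reduction and στ-equivalence. -/
def SRed (nfq : Tr → Tr) (M N : Tm) : Prop :=
  LBeta nfq M N ∨ Relation.EqvGen StepT M N

/-! ## Naive (eager) CAU⁻ reduction on στ-normal terms -/

/-- A principal contraction in the style of CAU⁻ (using an explicit substitution for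
the redex, to be normalized away immediately afterwards), closed under arbitrary
CAU⁻ contexts. -/
inductive NaiveBeta : Tm → Tm → Prop
  | beta (M N) : NaiveBeta (.ap (.lam M) N) (.ann .pb (.sub M (.cons N .id)))
  | betaBang (q M N) :
      NaiveBeta (.lets (.bang q M) N) (.ann .pbb (.sub N (.cons (.ann q M) .id)))
  | insp {q M M'} : FInspT q M M' → NaiveBeta (.bang q M) (.bang q M')
  | lam {M M'} : NaiveBeta M M' → NaiveBeta (.lam M) (.lam M')
  | apL {M M'} (N) : NaiveBeta M M' → NaiveBeta (.ap M N) (.ap M' N)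
  | apR {N N'} (M) : NaiveBeta N N' → NaiveBeta (.ap M N) (.ap M N')
  | letsL {M M'} (N) : NaiveBeta M M' → NaiveBeta (.lets M N) (.lets M' N)
  | letsR {N N'} (M) : NaiveBeta N N' → NaiveBeta (.lets M N) (.lets M N')
  | bang {M M'} (q) : NaiveBeta M M' → NaiveBeta (.bang q M) (.bang q M')
  | ann {M M'} (q) : NaiveBeta M M' → NaiveBeta (.ann q M) (.ann q M')
  | inspC {ϑ} (i : Fin 9) {M'} : NaiveBeta (ϑ i) M' →
      NaiveBeta (.insp ϑ) (.insp (Function.update ϑ i M'))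

/-- One step of CAU⁻ reduction: a principal contraction followed by normalization. -/
def CRed (nf : Tm → Tm) (M N : Tm) : Prop := ∃ R, NaiveBeta M R ∧ N = nf R

/-! ## The eager β̄-reduction on focused forms -/

/-- β̄-reduction: the relation on focused forms induced by meta-level β on pure terms. -/
def BbarT (nf : Tm → Tm) (A B : Tm) : Prop :=
  ∃ M N : NTm, BetaN M N ∧ A = focusT nf (toTm M) ∧ B = focusT nf (toTm N)

/-- Focusing of a σ-normal substitution `N⃗ · ↑ᵖ` given by a list of pure terms. -/
def focusNSub (nf : Tm → Tm) (l : List NTm) (p : ℕ) : Sb :=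
  mkSub (l.map fun M => focusT nf (toTm M)) p

/-- β̄-reduction on focused substitutions: one component β-reduces. -/
def BbarS (nf : Tm → Tm) (A B : Sb) : Prop :=
  ∃ (l : List NTm) (p : ℕ) (i : ℕ) (h : i < l.length) (N' : NTm),
    BetaN (l.get ⟨i, h⟩) N' ∧ A = focusNSub nf l p ∧ B = focusNSub nf (l.set i N') p

/-- One-hole σ-normal contexts over pure terms. -/
inductive NCtx : Type
  | hole : NCtx
  | lam : NCtx → NCtx
  | apL : NCtx → NTm → NCtx
  | apR : NTm → NCtx → NCtx
  | letsL : NCtx → NTm → NCtx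
  | letsR : NTm → NCtx → NCtx
  | bang : NTr → NCtx → NCtx
  | ann : NTr → NCtx → NCtx
  | insp : (Fin 9 → NTm) → Fin 9 → NCtx → NCtx

/-- Filling the hole of a σ-normal context. -/
def fillN : NCtx → NTm → NTm
  | .hole, X => X
  | .lam C, X => .lam (fillN C X)
  | .apL C N, X => .ap (fillN C X) N
  | .apR M C, X => .ap M (fillN C X)
  | .letsL C N, X => .lets (fillN C X) N
  | .letsR M C, X => .lets M (fillN C X)
  | .bang q C, X => .bang q (fillN C X)
  | .ann q C, X => .ann q (fillN C X)
  | .insp ϑ i C, X => .insp (Function.update ϑ i (fillN C X))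

end CAU
namespace CAU

/-! ## The call-by-value abstract machine -/

mutual
  /-- Machine closures. -/
  inductive Clo : Type
    | lamC : NTm → Env → Clo          -- ⌊(λM̂)[e]⌋
    | bangC : Tr → Clo → Clo          -- !_q C
  /-- Machine values `q ▷ C`. -/
  inductive Val : Type
    | mk : Tr → Clo → Val
  /-- Machine environments: lists of values. -/
  inductive Env : Type
    | nil : Env
    | cons : Val → Env → Env
end

instance : Inhabited Clo := ⟨.lamC (.var 0) .nil⟩
instance : Inhabited Val := ⟨.mk .r default⟩
instance : Inhabited Env := ⟨.nil⟩

/-- The trail of a value. -/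
def Val.tr : Val → Tr | .mk q _ => q
/-- The closure of a value. -/
def Val.clo : Val → Clo | .mk _ C => C

/-- Length of an environment. -/
def envLen : Env → ℕ
  | .nil => 0
  | .cons _ e => envLen e + 1

/-- Environment lookup `e(n)`, returning the n-th closure (0-based). -/
def lookupE : Env → ℕ → Option Clo
  | .cons (.mk _ C) _, 0 => some C
  | .cons _ e, n + 1 => lookupE e n
  | .nil, _ => none

mutual
  /-- The CAU⁻σ term denoted by a closure. -/
  def cloToTm : Clo → Tm
    | .lamC M e => .er (.sub (.lam (toTm M)) (envToSub e))
    | .bangC q C => .bang q (cloToTm C)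
  /-- The CAU⁻σ term denoted by a value. -/
  def valToTm : Val → Tm
    | .mk q C => .ann q (cloToTm C)
  /-- The explicit substitution denoted by an environment. -/
  def envToSub : Env → Sb
    | .nil => .id
    | .cons V e => .cons (valToTm V) (envToSub e)
end

/-- Pure terms closed below depth `d` (all free indices < d). -/
def closedN (d : ℕ) : NTm → Prop
  | .var n => n < d
  | .lam M => closedN (d+1) M
  | .ap M N => closedN d M ∧ closedN d N
  | .lets M N => closedN d M ∧ closedN (d+1) N
  | .bang _ M => closedN d M
  | .ann _ M => closedN d M
  | .insp ϑ => ∀ i, closedN d (ϑ i)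

mutual
  /-- Closed closures. -/
  def closedClo : Clo → Prop
    | .lamC M e => closedN (envLen e + 1) M ∧ closedEnv e
    | .bangC _ C => closedClo C
  /-- Closed values. -/
  def closedVal : Val → Prop
    | .mk _ C => closedClo C
  /-- Closed environments. -/
  def closedEnv : Env → Prop
    | .nil => True
    | .cons V e => closedVal V ∧ closedEnv e
end

/-- Machine codes: pure terms or fragments of abstract syntax tree. -/
inductive Code : Type
  | tm : NTm → Code
  | ap : Code
  | bg : Code
  | lt : NTm → Code
  | ins : Code

/-- Stack tuples `(q | κ | e)`. -/
structure Tup where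
  q : Tr
  κ : Code
  e : Env

instance : Inhabited Tup := ⟨⟨.r, .ap, .nil⟩⟩

/-- Stacks. -/
abbrev Stack := List Tup
/-- Dumps. -/
abbrev Dump := List Val
/-- Machine configurations. -/
abbrev Config := Stack × Dump

/-- The tuple for a pending inspection branch. -/
def brTup (x : Tr × NTm × Env) : Tup := ⟨x.1, .tm x.2.1, x.2.2⟩

mutual
  /-- Well-formed context configurations. -/
  inductive WfCtx : Stack → Dump → Prop
    | nil : WfCtx [] []
    | apTm {π D} (q q' M e) : WfCtx π D →
        WfCtx (⟨q, .tm M, e⟩ :: ⟨q', .ap, .nil⟩ :: π) D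
    | apVal {π D} (q V) : WfCtx π D → WfCtx (⟨q, .ap, .nil⟩ :: π) (V :: D)
    | lt {π D} (q M e) : WfCtx π D → WfCtx (⟨q, .lt M, e⟩ :: π) D
    | bg {π D} (q) : WfCtx π D → WfCtx (⟨q, .bg, .nil⟩ :: π) D
    | ins {π D} (q') (ts : List (Tr × NTm × Env)) (vs : List Val) :
        vs.length + ts.length = 8 → WfCtx π D →
        WfCtx (ts.map brTup ++ ⟨q', .ins, .nil⟩ :: π) (vs ++ D)
  /-- Well-formed term configurations. -/
  inductive WfTm : Stack → Dump → Prop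
    | fin (V) : WfTm [] [V]
    | tm {π D} (q M e) : WfCtx π D → WfTm (⟨q, .tm M, e⟩ :: π) D
    | ap {π D} (q V W) : WfCtx π D → WfTm (⟨q, .ap, .nil⟩ :: π) (W :: V :: D)
    | lt {π D} (q M e V) : WfCtx π D → WfTm (⟨q, .lt M, e⟩ :: π) (V :: D)
    | bg {π D} (q V) : WfCtx π D → WfTm (⟨q, .bg, .nil⟩ :: π) (V :: D)
    | ins {π D} (q) (vs : List Val) : vs.length = 9 → WfCtx π D →
        WfTm (⟨q, .ins, .nil⟩ :: π) (vs ++ D)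
end

/-- The term denoted by a pending-branch tuple. -/
def tupDen (x : Tr × NTm × Env) : Tm := .ann x.1 (.er (.sub (toTm x.2.1) (envToSub x.2.2)))

mutual
  /-- Denotation of context configurations as CAU⁻σ one-hole contexts. -/
  inductive CtxDen : Stack → Dump → (Tm → Tm) → Prop
    | nil : CtxDen [] [] id
    | apTm {π D E} (q q' M e) : CtxDen π D E →
        CtxDen (⟨q, .tm M, e⟩ :: ⟨q', .ap, .nil⟩ :: π) D
          (fun X => E (.ann q' (.ap X (.ann q (.er (.sub (toTm M) (envToSub e)))))))
    | apVal {π D E} (q V) : CtxDen π D E →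
        CtxDen (⟨q, .ap, .nil⟩ :: π) (V :: D) (fun X => E (.ann q (.ap (valToTm V) X)))
    | lt {π D E} (q N e) : CtxDen π D E →
        CtxDen (⟨q, .lt N, e⟩ :: π) D
          (fun X => E (.ann q (.lets X
            (.er (.sub (toTm N) (.cons .one (.comp (envToSub e) .sh)))))))
    | bg {π D E} (q) : CtxDen π D E →
        CtxDen (⟨q, .bg, .nil⟩ :: π) D (fun X => E (.ann q (.bang .r X)))
    | ins {π D E} (q') (ts : List (Tr × NTm × Env)) (vs : List Val) :
        vs.length + ts.length = 8 → CtxDen π D E →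
        CtxDen (ts.map brTup ++ ⟨q', .ins, .nil⟩ :: π) (vs ++ D)
          (fun X => E (.ann q' (.insp fun i =>
            if h : (i : ℕ) < vs.length then valToTm (vs.get ⟨i, h⟩)
            else if (i : ℕ) = vs.length then X
            else tupDen (ts.getD ((i : ℕ) - vs.length - 1) default))))
  /-- Denotation of term configurations as CAU⁻σ terms. -/
  inductive TmDen : Stack → Dump → Tm → Prop
    | fin (V) : TmDen [] [V] (valToTm V)
    | tm {π D E} (q M e) : CtxDen π D E →
        TmDen (⟨q, .tm M, e⟩ :: π) D (E (.ann q (.er (.sub (toTm M) (envToSub e)))))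
    | ap {π D E} (q V W) : CtxDen π D E →
        TmDen (⟨q, .ap, .nil⟩ :: π) (W :: V :: D) (E (.ann q (.ap (valToTm V) (valToTm W))))
    | lt {π D E} (q N e V) : CtxDen π D E →
        TmDen (⟨q, .lt N, e⟩ :: π) (V :: D)
          (E (.ann q (.lets (valToTm V)
            (.er (.sub (toTm N) (.cons .one (.comp (envToSub e) .sh)))))))
    | bg {π D E} (q V) : CtxDen π D E →
        TmDen (⟨q, .bg, .nil⟩ :: π) (V :: D) (E (.ann q (.bang .r (valToTm V))))
    | ins {π D E} (q) (vs : List Val) : vs.length = 9 → CtxDen π D E →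
        TmDen (⟨q, .ins, .nil⟩ :: π) (vs ++ D)
          (E (.ann q (.insp fun i => valToTm (vs.getD (i : ℕ) default))))
end

/-- The trail-collection operator `I(q_ϑ, π, D)` materializing the trail of the
enclosing bang for trail inspection. -/
inductive IRel (nfq : Tr → Tr) : Tr → Stack → Dump → Tr → Prop
  | bg {qθ π D} (q') : IRel nfq qθ (⟨q', .bg, .nil⟩ :: π) D (nfq qθ)
  | apTm {qθ π D res} (q q' M e) :
      IRel nfq (.t q' (.ap qθ q)) π D res →
      IRel nfq qθ (⟨q, .tm M, e⟩ :: ⟨q', .ap, .nil⟩ :: π) D res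
  | apVal {qθ π D res} (q q'' C) :
      IRel nfq (.t q (.ap q'' qθ)) π D res →
      IRel nfq qθ (⟨q, .ap, .nil⟩ :: π) (Val.mk q'' C :: D) res
  | lt {qθ π D res} (q N e) :
      IRel nfq (.t q (.lets qθ .r)) π D res →
      IRel nfq qθ (⟨q, .lt N, e⟩ :: π) D res
  | ins {qθ π D res} (q') (ts : List (Tr × NTm × Env)) (vs : List Val) :
      vs.length + ts.length = 8 →
      IRel nfq (.t q' (.tb fun i =>
          if h : (i : ℕ) < vs.length then (vs.get ⟨i, h⟩).tr
          else if (i : ℕ) = vs.length then qθ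
          else (ts.getD ((i : ℕ) - vs.length - 1) default).1)) π D res →
      IRel nfq qθ (ts.map brTup ++ ⟨q', .ins, .nil⟩ :: π) (vs ++ D) res

/-- The inspection trail of nine evaluated branches, as a term (de Bruijn encoding of
trail constructors as the dangling indices 1..9). -/
def tTT : Tr → NTm
  | .r => .var 0
  | .t q q' => .ap (.ap (.var 1) (tTT q)) (tTT q')
  | .pb => .var 2
  | .pbb => .var 3
  | .ti => .var 4
  | .lam q => .ap (.var 5) (tTT q)
  | .ap q q' => .ap (.ap (.var 6) (tTT q)) (tTT q')
  | .lets q q' => .ap (.ap (.var 7) (tTT q)) (tTT q')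
  | .tb ζ => (List.ofFn fun i => tTT (ζ i)).foldl .ap (.var 8)
  | .ext _ => .var 0

/-- The environment `[r ▷ C₁, …, r ▷ C₉]` of inspection branches. -/
def mkEnv (vs : List Val) : Env := vs.foldr (fun V e => .cons (.mk .r V.clo) e) .nil

/-- Transition relation of the call-by-value abstract machine. -/
inductive MStep (nfq : Tr → Tr) : Config → Config → Prop
  | r1 {π D} (q M N e) :
      MStep nfq (⟨q, .tm (.ap M N), e⟩ :: π, D)
        (⟨.r, .tm M, e⟩ :: ⟨.r, .tm N, e⟩ :: ⟨q, .ap, .nil⟩ :: π, D)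
  | r2 {π D} (q q' C q'' M e) :
      MStep nfq (⟨q, .ap, .nil⟩ :: π, Val.mk q' C :: Val.mk q'' (.lamC M e) :: D)
        (⟨.t q (.t (.ap q'' q') .pb), .tm M, .cons (.mk .r C) e⟩ :: π, D)
  | r3 {π D} (q M e) :
      MStep nfq (⟨q, .tm (.lam M), e⟩ :: π, D) (π, Val.mk q (.lamC M e) :: D)
  | r4 {π D} (q M N e) :
      MStep nfq (⟨q, .tm (.lets M N), e⟩ :: π, D)
        (⟨.r, .tm M, e⟩ :: ⟨q, .lt N, e⟩ :: π, D)
  | r5 {π D} (q N e q' V) :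
      MStep nfq (⟨q, .lt N, e⟩ :: π, Val.mk q' (.bangC V.tr V.clo) :: D)
        (⟨.t q (.t (.lets q' .r) (.t .pbb
            (.ext (.sub (.er (.sub (toTm N) (.cons .one (.comp (envToSub e) .sh))))
              (.cons (valToTm V) .id))))),
          .tm N, .cons V e⟩ :: π, D)
  | r6 {π D} (q q' M e) :
      MStep nfq (⟨q, .tm (.bang q' M), e⟩ :: π, D)
        (⟨.t (toTr q') (.ext (.sub (toTm M) (envToSub e))), .tm M, e⟩ :: ⟨q, .bg, .nil⟩ :: π, D)
  | r7 {π D} (q V) :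
      MStep nfq (⟨q, .bg, .nil⟩ :: π, V :: D) (π, Val.mk q (.bangC V.tr V.clo) :: D)
  | r8 {π D} (q ϑ e) :
      MStep nfq (⟨q, .tm (.insp ϑ), e⟩ :: π, D)
        ((List.ofFn fun i : Fin 9 => Tup.mk .r (.tm (ϑ i)) e) ++ ⟨q, .ins, .nil⟩ :: π, D)
  | r9 {π D} (q) (vs : List Val) (qres : Tr) :
      vs.length = 9 →
      IRel nfq (.t q (.tb fun i => (vs.getD (i : ℕ) default).tr)) π D qres →
      MStep nfq (⟨q, .ins, .nil⟩ :: π, vs ++ D)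
        (⟨.t q (.t (.tb fun i => (vs.getD (i : ℕ) default).tr) .ti),
          .tm (tTT qres), mkEnv vs⟩ :: π, D)
  | r10 {π D} (q n e C) :
      lookupE e n = some C →
      MStep nfq (⟨q, .tm (.var n), e⟩ :: π, D) (π, Val.mk q C :: D)

/-- Closedness conditions on stack tuples. -/
def TupClosed : Tup → Prop
  | ⟨_, .tm M, e⟩ => closedN (envLen e) M ∧ closedEnv e
  | ⟨_, .lt N, e⟩ => closedN (envLen e + 1) N ∧ closedEnv e
  | ⟨_, _, e⟩ => closedEnv e

/-- Valid machine states: well-formed term configurations whose tuples and dump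
values are closed. -/
def Valid (ς : Config) : Prop :=
  WfTm ς.1 ς.2 ∧ (∀ t ∈ ς.1, TupClosed t) ∧ (∀ V ∈ ς.2, closedVal V)

end CAU

namespace CAU

/-!
The lookup itself is routine σ-calculus: `⌊n[e]⌋` becomes `⌊q ▷ C⌋ → ⌊C⌋`. The difficulty is
that a closure `C = ⌊(λM)[e']⌋` is itself an erasure and there is no rule `⌊⌊M⌋⌋ → ⌊M⌋`. So we
show that every closure is στ-equivalent to an erasure-free term, on which erasure is the identity.
Pushing `⌊·[s]⌋` through a term requires the same of the terms substituted by `s`, and, since `s`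
is lifted under binders, also of their images under renamings (`ErStable`); environments have
this property by structural recursion on closures.
-/

theorem _root_.Relation.EqvGen.map {α β : Type*} {r : α → α → Prop} {s : β → β → Prop}
    (f : α → β) (hf : ∀ a b, r a b → s (f a) (f b)) {a b : α} (h : Relation.EqvGen r a b) :
    Relation.EqvGen s (f a) (f b) := by
  induction h with
  | rel a b hab => exact .rel _ _ (hf a b hab)
  | refl a => exact .refl _
  | symm a b _ ih => exact .symm _ _ ih
  | trans a b c _ _ ih₁ ih₂ => exact .trans _ _ _ ih₁ ih₂

abbrev EqvT : Tm → Tm → Prop := Relation.EqvGen StepT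
abbrev EqvS : Sb → Sb → Prop := Relation.EqvGen StepS

namespace EqvT

theorem refl (M : Tm) : EqvT M M := Relation.EqvGen.refl M
theorem step {M N : Tm} (h : StepT M N) : EqvT M N := Relation.EqvGen.rel _ _ h
theorem symm {M N : Tm} (h : EqvT M N) : EqvT N M := Relation.EqvGen.symm _ _ h
theorem trans {M N P : Tm} (h₁ : EqvT M N) (h₂ : EqvT N P) : EqvT M P :=
  Relation.EqvGen.trans _ _ _ h₁ h₂

instance : Trans EqvT EqvT EqvT := ⟨trans⟩

theorem congr (f : Tm → Tm) (hf : ∀ {M N}, StepT M N → StepT (f M) (f N)) {M M' : Tm}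
    (h : EqvT M M') : EqvT (f M) (f M') :=
  h.map f fun _ _ => hf

theorem er {M M' : Tm} (h : EqvT M M') : EqvT (.er M) (.er M') := congr Tm.er .erC h
theorem lam {M M' : Tm} (h : EqvT M M') : EqvT (.lam M) (.lam M') := congr Tm.lam .lamC h

theorem ap {M M' N N' : Tm} (hM : EqvT M M') (hN : EqvT N N') :
    EqvT (.ap M N) (.ap M' N') :=
  (congr (Tm.ap · N) (.apL N) hM).trans (congr (Tm.ap M') (.apR M') hN)

theorem lets {M M' N N' : Tm} (hM : EqvT M M') (hN : EqvT N N') :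
    EqvT (.lets M N) (.lets M' N') :=
  (congr (Tm.lets · N) (.letsL N) hM).trans (congr (Tm.lets M') (.letsR M') hN)

theorem subM {M M' : Tm} (s : Sb) (h : EqvT M M') : EqvT (.sub M s) (.sub M' s) :=
  congr (Tm.sub · s) (.subM s) h

theorem subS (M : Tm) {s s' : Sb} (h : EqvS s s') : EqvT (.sub M s) (.sub M s') :=
  h.map (Tm.sub M) fun _ _ => .subS M

theorem insp_update (ϑ : Fin 9 → Tm) (i : Fin 9) {M M' : Tm} (h : EqvT M M') :
    EqvT (.insp (Function.update ϑ i M)) (.insp (Function.update ϑ i M')) :=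
  congr (fun X => .insp (Function.update ϑ i X)) (fun {X _} hXY => by
    simpa using StepT.inspC (ϑ := Function.update ϑ i X) i (by simpa using hXY)) h

theorem insp {ϑ ϑ' : Fin 9 → Tm} (h : ∀ i, EqvT (ϑ i) (ϑ' i)) :
    EqvT (.insp ϑ) (.insp ϑ') := by
  classical
  suffices ∀ s : Finset (Fin 9), EqvT (.insp ϑ) (.insp (s.piecewise ϑ' ϑ)) by
    simpa using this .univ
  intro s
  induction s using Finset.induction_on with
  | empty => simpa using refl _
  | @insert i s hi ih =>
    rw [Finset.piecewise_insert]
    refine ih.trans ?_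
    conv_lhs => rw [← Function.update_eq_self i (s.piecewise ϑ' ϑ),
      Finset.piecewise_eq_of_notMem _ _ _ hi]
    exact insp_update _ i (h i)

end EqvT

theorem EqvS.compR (s : Sb) {t t' : Sb} (h : EqvS t t') : EqvS (.comp s t) (.comp s t') :=
  h.map (Sb.comp s) fun _ _ => .compR s

theorem pow_comp_sh (n : ℕ) : EqvS (.comp (pow n) .sh) (pow (n + 1)) := by
  induction n with
  | zero => exact .refl _
  | succ n ih => exact .trans _ _ _ (.rel _ _ (.compAssoc _ _ _)) (ih.compR .sh)

theorem pow_comp_id (n : ℕ) : EqvS (.comp (pow n) .id) (pow n) := by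
  induction n with
  | zero => exact .rel _ _ .shId
  | succ n ih => exact .trans _ _ _ (.rel _ _ (.compAssoc _ _ _)) (ih.compR .sh)

theorem toTm_var_sub_sh (n : ℕ) : EqvT (.sub (toTm (.var n)) .sh) (toTm (.var (n + 1))) := by
  cases n with
  | zero => exact .refl _
  | succ n => exact (EqvT.step (.subSub _ _ _)).trans (.subS _ (pow_comp_sh n))

theorem toTm_var_sub_id (n : ℕ) : EqvT (.sub (toTm (.var n)) .id) (toTm (.var n)) := by
  cases n with
  | zero => exact .step .subOneId
  | succ n => exact (EqvT.step (.subSub _ _ _)).trans (.subS _ (pow_comp_id n))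

theorem toTm_var_succ_sub_cons (n : ℕ) (M : Tm) (s : Sb) :
    EqvT (.sub (toTm (.var (n + 1))) (.cons M s)) (.sub (toTm (.var n)) s) :=
  calc EqvT _ (.sub (.sub (toTm (.var n)) .sh) (.cons M s)) := .subM _ (toTm_var_sub_sh n).symm
    EqvT _ (.sub (toTm (.var n)) (.comp .sh (.cons M s))) := .step (.subSub _ _ _)
    EqvT _ _ := .subS _ (.rel _ _ (.shCons _ _))

def EqvClosed (P : Tm → Prop) : Prop := ∀ ⦃M N⦄, EqvT M N → P M → P N

def SbForall (P : Tm → Prop) (s : Sb) : Prop := ∀ n, P (.sub (toTm (.var n)) s)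

namespace SbForall

variable {P : Tm → Prop} {s : Sb}

theorem cons (hP : EqvClosed P) {M : Tm} (hM : P M) (hs : SbForall P s) :
    SbForall P (.cons M s)
  | 0 => hP (.symm (.step (.subOneCons M s))) hM
  | n + 1 => hP (toTm_var_succ_sub_cons n M s).symm (hs n)

theorem comp (hP : EqvClosed P) {t : Sb} (ht : ∀ M, P M → P (.sub M t)) (hs : SbForall P s) :
    SbForall P (.comp s t) :=
  fun n => hP (.step (.subSub _ _ _)) (ht _ (hs n))

end SbForall

def IsVar (M : Tm) : Prop := ∃ m, EqvT M (toTm (.var m))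

abbrev IsRenaming : Sb → Prop := SbForall IsVar

theorem isVar_eqvClosed : EqvClosed IsVar :=
  fun _ _ h ⟨m, hm⟩ => ⟨m, h.symm.trans hm⟩

theorem IsVar.sub {M : Tm} {r : Sb} (hM : IsVar M) (hr : IsRenaming r) : IsVar (.sub M r) := by
  obtain ⟨m, hm⟩ := hM
  obtain ⟨m', hm'⟩ := hr m
  exact ⟨m', (EqvT.subM r hm).trans hm'⟩

theorem isRenaming_sh : IsRenaming .sh := fun n => ⟨n + 1, toTm_var_sub_sh n⟩

theorem IsRenaming.comp {r t : Sb} (hr : IsRenaming r) (ht : IsRenaming t) :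
    IsRenaming (.comp r t) :=
  SbForall.comp isVar_eqvClosed (fun _ hM => hM.sub ht) hr

theorem IsRenaming.lift {r : Sb} (hr : IsRenaming r) : IsRenaming (.cons .one (.comp r .sh)) :=
  SbForall.cons isVar_eqvClosed ⟨0, .refl _⟩ (hr.comp isRenaming_sh)

/-- The body of a bang is arbitrary because `⌊!_q M⌋ → !_q M` erases nothing inside it. -/
inductive ErFree : Tm → Prop
  | var (n : ℕ) : ErFree (toTm (.var n))
  | lam {M} : ErFree M → ErFree (.lam M)
  | ap {M N} : ErFree M → ErFree N → ErFree (.ap M N)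
  | lets {M N} : ErFree M → ErFree N → ErFree (.lets M N)
  | bang (q M) : ErFree (.bang q M)
  | insp {ϑ} : (∀ i, ErFree (ϑ i)) → ErFree (.insp ϑ)

theorem ErFree.er_eqv {M : Tm} (h : ErFree M) : EqvT (.er M) M := by
  induction h with
  | var n => cases n with
    | zero => exact .step .erOne
    | succ n => exact .step (.erOneSh n)
  | lam _ ih => exact (EqvT.step (.erLam _)).trans ih.lam
  | ap _ _ ihM ihN => exact (EqvT.step (.erAp _ _)).trans (ihM.ap ihN)
  | lets _ _ ihM ihN => exact (EqvT.step (.erLets _ _)).trans (ihM.lets ihN)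
  | bang q M => exact .step (.erBang q M)
  | insp _ ih => exact (EqvT.step (.erInsp _)).trans (.insp ih)

def EqvErFree (M : Tm) : Prop := ∃ N, ErFree N ∧ EqvT M N

namespace EqvErFree

theorem of_erFree {M : Tm} (h : ErFree M) : EqvErFree M := ⟨M, h, .refl M⟩

theorem eqvClosed : EqvClosed EqvErFree :=
  fun _ _ h ⟨P, hP, hMP⟩ => ⟨P, hP, h.symm.trans hMP⟩

theorem of_eqvT {M N : Tm} (h : EqvT M N) (hN : EqvErFree N) : EqvErFree M :=
  eqvClosed h.symm hN

theorem lam {M : Tm} : EqvErFree M → EqvErFree (.lam M)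
  | ⟨_, hP, h⟩ => ⟨_, hP.lam, h.lam⟩

theorem ap {M N : Tm} : EqvErFree M → EqvErFree N → EqvErFree (.ap M N)
  | ⟨_, hP, h⟩, ⟨_, hQ, h'⟩ => ⟨_, hP.ap hQ, h.ap h'⟩

theorem lets {M N : Tm} : EqvErFree M → EqvErFree N → EqvErFree (.lets M N)
  | ⟨_, hP, h⟩, ⟨_, hQ, h'⟩ => ⟨_, hP.lets hQ, h.lets h'⟩

theorem insp {ϑ : Fin 9 → Tm} (h : ∀ i, EqvErFree (ϑ i)) : EqvErFree (.insp ϑ) := by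
  choose P hP hϑP using h
  exact ⟨_, .insp hP, .insp hϑP⟩

theorem er_eqv {M : Tm} : EqvErFree M → EqvT (.er M) M
  | ⟨_, hP, h⟩ => h.er.trans (hP.er_eqv.trans h.symm)

end EqvErFree

theorem ErFree.sub {M : Tm} (hM : ErFree M) {r : Sb} (hr : IsRenaming r) :
    EqvErFree (.sub M r) := by
  induction hM generalizing r with
  | var n =>
    obtain ⟨m, hm⟩ := hr n
    exact ⟨_, .var m, hm⟩
  | lam _ ih => exact EqvErFree.of_eqvT (.step (.subLam _ _)) (ih hr.lift).lam
  | ap _ _ ihM ihN =>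
    exact EqvErFree.of_eqvT (.step (.subAp _ _ _)) ((ihM hr).ap (ihN hr))
  | lets _ _ ihM ihN =>
    exact EqvErFree.of_eqvT (.step (.subLets _ _ _)) ((ihM hr).lets (ihN hr.lift))
  | bang q M => exact ⟨_, .bang q _, .step (.subBang q M r)⟩
  | insp _ ih => exact EqvErFree.of_eqvT (.step (.subInsp _ _)) (.insp fun i => ih i hr)

theorem EqvErFree.sub {M : Tm} {r : Sb} (hM : EqvErFree M) (hr : IsRenaming r) :
    EqvErFree (.sub M r) :=
  let ⟨_, hP, h⟩ := hM
  EqvErFree.of_eqvT (EqvT.subM r h) (hP.sub hr)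

def ErStable (M : Tm) : Prop :=
  EqvErFree (.er M) ∧ ∀ r, IsRenaming r → EqvErFree (.er (.sub M r))

namespace ErStable

theorem eqvClosed : EqvClosed ErStable :=
  fun _ _ h hM => ⟨EqvErFree.eqvClosed h.er hM.1,
    fun r hr => EqvErFree.eqvClosed (h.subM r).er (hM.2 r hr)⟩

theorem of_eqvErFree {M : Tm} (hM : EqvErFree M) : ErStable M :=
  ⟨EqvErFree.of_eqvT hM.er_eqv hM,
    fun _ hr => EqvErFree.of_eqvT (hM.sub hr).er_eqv (hM.sub hr)⟩

theorem sub {M : Tm} (hM : ErStable M) {r : Sb} (hr : IsRenaming r) : ErStable (.sub M r) :=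
  ⟨hM.2 r hr, fun t ht =>
    EqvErFree.of_eqvT (EqvT.step (.subSub M r t)).er (hM.2 _ (hr.comp ht))⟩

theorem ann {M : Tm} (hM : ErStable M) (q : Tr) : ErStable (.ann q M) :=
  ⟨EqvErFree.of_eqvT (.step (.erAnn q M)) hM.1, fun r hr =>
    EqvErFree.of_eqvT ((EqvT.step (.subAnn q M r)).er.trans (.step (.erAnn _ _)))
      (hM.2 r hr)⟩

end ErStable

theorem SbForall.erStable_lift {s : Sb} (hs : SbForall ErStable s) :
    SbForall ErStable (.cons .one (.comp s .sh)) :=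
  .cons ErStable.eqvClosed (.of_eqvErFree (.of_erFree (.var 0)))
    (.comp ErStable.eqvClosed (fun _ hM => hM.sub isRenaming_sh) hs)

theorem eqvErFree_er_sub_toTm (M : NTm) {s : Sb} (hs : SbForall ErStable s) :
    EqvErFree (.er (.sub (toTm M) s)) := by
  induction M generalizing s with
  | var n => exact (hs n).1
  | lam _ ih =>
    exact EqvErFree.of_eqvT ((EqvT.step (.subLam _ _)).er.trans (.step (.erLam _)))
      (ih hs.erStable_lift).lam
  | ap _ _ ihM ihN =>
    exact EqvErFree.of_eqvT ((EqvT.step (.subAp _ _ _)).er.trans (.step (.erAp _ _)))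
      ((ihM hs).ap (ihN hs))
  | lets _ _ ihM ihN =>
    exact EqvErFree.of_eqvT ((EqvT.step (.subLets _ _ _)).er.trans (.step (.erLets _ _)))
      ((ihM hs).lets (ihN hs.erStable_lift))
  | bang _ _ =>
    exact ⟨_, .bang _ _, (EqvT.step (.subBang _ _ _)).er.trans (.step (.erBang _ _))⟩
  | ann _ _ ih =>
    exact EqvErFree.of_eqvT ((EqvT.step (.subAnn _ _ _)).er.trans (.step (.erAnn _ _)))
      (ih hs)
  | insp _ ih =>
    exact EqvErFree.of_eqvT ((EqvT.step (.subInsp _ _)).er.trans (.step (.erInsp _)))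
      (.insp fun i => ih i hs)

theorem sbForall_erStable_id : SbForall ErStable .id :=
  fun n => ErStable.eqvClosed (toTm_var_sub_id n).symm (.of_eqvErFree (.of_erFree (.var n)))

mutual

theorem eqvErFree_cloToTm : (C : Clo) → EqvErFree (cloToTm C)
  | .lamC M e => eqvErFree_er_sub_toTm (.lam M) (sbForall_erStable_envToSub e)
  | .bangC q C => .of_erFree (.bang q (cloToTm C))

theorem sbForall_erStable_envToSub : (e : Env) → SbForall ErStable (envToSub e)
  | .nil => sbForall_erStable_id
  | .cons (.mk q C) e =>
    .cons ErStable.eqvClosed ((ErStable.of_eqvErFree (eqvErFree_cloToTm C)).ann q)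
      (sbForall_erStable_envToSub e)

end

theorem sub_envToSub_of_lookupE {e : Env} {n : ℕ} {C : Clo} (h : lookupE e n = some C) :
    ∃ q, EqvT (.sub (toTm (.var n)) (envToSub e)) (valToTm (.mk q C)) := by
  induction n generalizing e with
  | zero =>
    obtain _ | ⟨⟨q, C'⟩, e⟩ := e
    · cases h
    · cases h
      exact ⟨q, .step (.subOneCons _ _)⟩
  | succ n ih =>
    obtain _ | ⟨⟨q, C'⟩, e⟩ := e
    · cases h
    · obtain ⟨q, hq⟩ := ih h
      exact ⟨q, (toTm_var_succ_sub_cons n _ _).trans hq⟩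

/-- Correctness of variable lookup: if the closure `n[e]` is closed (the index `n` is
bound by the environment `e`), then `⌊n[e]⌋` reduces in zero or more CAU⁻σ steps to
the n-th closure stored in `e`. -/
theorem lookup_correct (nfq : Tr → Tr) (hq : IsNFQ nfq) :
    ∀ (e : Env) (n : ℕ) (C : Clo), lookupE e n = some C →
      Relation.ReflTransGen (SRed nfq)
        (.er (.sub (toTm (.var n)) (envToSub e))) (cloToTm C) := by
  intro e n C h
  obtain ⟨q, hlookup⟩ := sub_envToSub_of_lookupE h
  refine .single (Or.inr ?_)
  calc EqvT _ (.er (.ann q (cloToTm C))) := hlookup.er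
    EqvT _ (.er (cloToTm C)) := .step (.erAnn q _)
    EqvT _ (cloToTm C) := (eqvErFree_cloToTm C).er_eqv
end CAU
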